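/- Let G_1,…,G_m be TT cores (G_p(i_p) an r_{p−1} × r_p real matrix, i_p = 1,…,n_p, r_0 = r_m = 1) and fix k ∈ {1,…,m}. If G_1,…,G_{k−1} are left-orthonormal and G_{k+1},…,G_m are right-orthonormal, then the frame matrix X_{≠k} = X^{<k} ⊗ I_{n_k} ⊗ (X^{>k})^T is orthonormal, i.e. (X_{≠k})^T X_{≠k} = I_{r_{k−1} n_k r_k}. -/
import Mathlib


open Matrix

/-- Product of a chain of matrices `M s * M (s+1) * ⋯ * M (s+L-1)` along a family of
index types `ι`. -/
def matChain (R : Type*) [Semiring R] (ι : ℕ → Type*) [∀ p, Fintype (ι p)]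
    [∀ p, DecidableEq (ι p)] (M : (p : ℕ) → Matrix (ι p) (ι (p + 1)) R) (s : ℕ) :
    (L : ℕ) → Matrix (ι s) (ι (s + L)) R
  | 0 => (1 : Matrix (ι s) (ι s) R)
  | L + 1 => matChain R ι M s L * M (s + L)

/-- The matrices of the TT cores `G`, evaluated at the components of the multi-index `j`
(junk value `0` beyond position `m`). -/
def coresOf (m : ℕ) (n r : ℕ → ℕ)
    (G : (p : ℕ) → Fin (n p) → Matrix (Fin (r p)) (Fin (r (p + 1))) ℝ)
    (j : (p : Fin m) → Fin (n p)) (p : ℕ) : Matrix (Fin (r p)) (Fin (r (p + 1))) ℝ :=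
  if h : p < m then G p (j ⟨p, h⟩) else 0

section aux
variable {n r : ℕ → ℕ} (G : (p : ℕ) → Fin (n p) → Matrix (Fin (r p)) (Fin (r (p + 1))) ℝ)

/-- chain over an explicit tuple of indices -/
def chainT (s : ℕ) : (L : ℕ) → ((q : Fin L) → Fin (n (s + q))) → Matrix (Fin (r s)) (Fin (r (s + L))) ℝ
  | 0, _ => (1 : Matrix (Fin (r s)) (Fin (r s)) ℝ)
  | L + 1, t => chainT s L (fun q => t q.castSucc) * G (s + L) (t (Fin.last L))

lemma chainT_snoc (s L : ℕ) (t : (q : Fin L) → Fin (n (s + q))) (x : Fin (n (s + L))) :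
    chainT G s (L + 1) (Fin.snoc t x) = chainT G s L t * G (s + L) x := by
  rw [chainT]
  simp

lemma sum_snoc {M : Type*} [AddCommMonoid M] {L : ℕ} {β : Fin (L+1) → Type*} [∀ i, Fintype (β i)]
    (f : (∀ i, β i) → M) :
    ∑ t : ∀ i, β i, f t
      = ∑ t : ∀ i : Fin L, β i.castSucc, ∑ x : β (Fin.last L), f (Fin.snoc t x) := by
  rw [← (Fin.snocEquiv β).sum_comp f]
  rw [Fintype.sum_prod_type]
  rw [Finset.sum_comm]
  rfl

lemma left_orth_sum (s L : ℕ)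
    (h : ∀ p, s ≤ p → p < s + L → ∑ i : Fin (n p), (G p i)ᵀ * G p i = 1) :
    ∑ t : (q : Fin L) → Fin (n (s + q)), (chainT G s L t)ᵀ * chainT G s L t = 1 := by
  induction L with
  | zero =>
    rw [Fintype.sum_unique]
    simp [chainT]
  | succ L ih =>
    rw [sum_snoc (β := fun q : Fin (L+1) => Fin (n (s + q)))
      (fun t => (chainT G s (L+1) t)ᵀ * chainT G s (L+1) t)]
    have ihv := ih (fun p hp hp' => h p hp (by omega))
    have step : ∀ t : (q : Fin L) → Fin (n (s + q)), ∀ x : Fin (n (s + L)),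
        (chainT G s (L+1) (Fin.snoc t x))ᵀ * chainT G s (L+1) (Fin.snoc t x)
          = (G (s+L) x)ᵀ * ((chainT G s L t)ᵀ * chainT G s L t) * G (s+L) x := by
      intro t x
      rw [chainT_snoc, transpose_mul]
      simp only [Matrix.mul_assoc]
    calc (∑ t : (q : Fin L) → Fin (n (s + ↑(Fin.castSucc q))), ∑ x : Fin (n (s + L)),
            (chainT G s (L+1) (Fin.snoc t x))ᵀ * chainT G s (L+1) (Fin.snoc t x))
        = ∑ x : Fin (n (s + L)), ∑ t : (q : Fin L) → Fin (n (s + q)),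
            (G (s+L) x)ᵀ * ((chainT G s L t)ᵀ * chainT G s L t) * G (s+L) x := by
          rw [Finset.sum_comm]
          exact Finset.sum_congr rfl fun x _ => Finset.sum_congr rfl fun t _ => step t x
      _ = ∑ x : Fin (n (s + L)), (G (s+L) x)ᵀ * G (s+L) x := by
          refine Finset.sum_congr rfl fun x _ => ?_
          rw [← Matrix.sum_mul, ← Matrix.mul_sum, ihv, Matrix.mul_one]
      _ = 1 := h (s+L) (by omega) (by omega)

lemma right_orth_sum (s L : ℕ)
    (h : ∀ p, s ≤ p → p < s + L → ∑ i : Fin (n p), G p i * (G p i)ᵀ = 1) :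
    ∑ t : (q : Fin L) → Fin (n (s + q)), chainT G s L t * (chainT G s L t)ᵀ = 1 := by
  induction L with
  | zero =>
    rw [Fintype.sum_unique]
    simp [chainT]
  | succ L ih =>
    rw [sum_snoc (β := fun q : Fin (L+1) => Fin (n (s + q)))
      (fun t => chainT G s (L+1) t * (chainT G s (L+1) t)ᵀ)]
    have ihv := ih (fun p hp hp' => h p hp (by omega))
    have step : ∀ t : (q : Fin L) → Fin (n (s + q)), ∀ x : Fin (n (s + L)),
        chainT G s (L+1) (Fin.snoc t x) * (chainT G s (L+1) (Fin.snoc t x))ᵀ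
          = chainT G s L t * (G (s+L) x * (G (s+L) x)ᵀ) * (chainT G s L t)ᵀ := by
      intro t x
      rw [chainT_snoc, transpose_mul]
      simp only [Matrix.mul_assoc]
    calc (∑ t : (q : Fin L) → Fin (n (s + ↑(Fin.castSucc q))), ∑ x : Fin (n (s + L)),
            chainT G s (L+1) (Fin.snoc t x) * (chainT G s (L+1) (Fin.snoc t x))ᵀ)
        = ∑ t : (q : Fin L) → Fin (n (s + q)),
            chainT G s L t * (∑ x : Fin (n (s+L)), G (s+L) x * (G (s+L) x)ᵀ) * (chainT G s L t)ᵀ := by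
          refine Finset.sum_congr rfl fun t _ => ?_
          rw [Matrix.mul_sum, Matrix.sum_mul]
          exact Finset.sum_congr rfl fun x _ => step t x
      _ = 1 := by
          rw [h (s+L) (by omega) (by omega)]
          simpa using ihv
lemma matChain_eq_chainT {m : ℕ} (j : (p : Fin m) → Fin (n p)) (s : ℕ) :
    ∀ (L : ℕ) (hsL : s + L ≤ m),
    matChain ℝ (fun p => Fin (r p)) (coresOf m n r G j) s L
      = chainT G s L (fun q => j ⟨s + q, by omega⟩) := by
  intro L
  induction L with
  | zero => intro _; rfl
  | succ L ih =>
    intro hsL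
    rw [matChain, chainT, ih (by omega)]
    congr 1
    show coresOf m n r G j (s + L) = _
    rw [coresOf, dif_pos (show s + L < m by omega)]
    rfl

def splitIdx (m k : ℕ) (hk : k < m)
    (a : (q : Fin k) → Fin (n (0 + q))) (x : Fin (n k))
    (b : (q : Fin (m - (k+1))) → Fin (n (k+1+q))) (p : Fin m) : Fin (n p) :=
  if h : (p : ℕ) < k then Fin.cast (congrArg n (Nat.zero_add p)) (a ⟨p, h⟩)
  else if h2 : (p : ℕ) = k then Fin.cast (congrArg n h2.symm) x
  else Fin.cast (congrArg n (show k+1+((p:ℕ)-(k+1)) = p by omega)) (b ⟨(p:ℕ)-(k+1), by omega⟩)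

variable {m k : ℕ} (hk : k < m) (a : (q : Fin k) → Fin (n (0 + q))) (x : Fin (n k))
    (b : (q : Fin (m - (k+1))) → Fin (n (k+1+q)))

lemma splitIdx_left (q : Fin k) (hq : 0 + (q : ℕ) < m) :
    splitIdx m k hk a x b ⟨0 + (q : ℕ), hq⟩ = a q := by
  rw [splitIdx, dif_pos (show ((⟨0 + (q:ℕ), hq⟩ : Fin m) : ℕ) < k by simp)]
  apply Fin.ext
  simp only [Fin.coe_cast]
  exact congrArg (fun d => (a d : ℕ)) (Fin.ext (by simp))

lemma splitIdx_mid : splitIdx m k hk a x b ⟨k, hk⟩ = x := by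
  rw [splitIdx, dif_neg (by simp), dif_pos rfl]
  rfl

lemma splitIdx_right (q : Fin (m - (k+1))) (hq : k + 1 + (q : ℕ) < m) :
    splitIdx m k hk a x b ⟨k + 1 + (q : ℕ), hq⟩ = b q := by
  rw [splitIdx, dif_neg (show ¬(k + 1 + (q:ℕ) < k) by omega),
    dif_neg (show ¬(k + 1 + (q:ℕ) = k) by omega)]
  apply Fin.ext
  simp only [Fin.coe_cast]
  exact congrArg (fun d => (b d : ℕ))
    (Fin.ext (show k + 1 + (q:ℕ) - (k+1) = (q:ℕ) by omega))

lemma splitIdx_bijective :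
    Function.Bijective (fun w : ((q : Fin k) → Fin (n (0 + (q:ℕ)))) × Fin (n k) ×
        ((q : Fin (m - (k+1))) → Fin (n (k+1+(q:ℕ)))) =>
      splitIdx m k hk w.1 w.2.1 w.2.2) := by
  apply Function.bijective_iff_has_inverse.mpr
  refine ⟨fun j => (fun q => Fin.cast (congrArg n (Nat.zero_add (q:ℕ)).symm) (j ⟨(q:ℕ), by omega⟩),
      j ⟨k, hk⟩, fun q => j ⟨k+1+(q:ℕ), by omega⟩), ?_, ?_⟩
  · rintro ⟨a, x, b⟩
    refine Prod.ext ?_ (Prod.ext ?_ ?_)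
    · funext q
      show Fin.cast (congrArg n (Nat.zero_add (q:ℕ)).symm)
          (splitIdx m k hk a x b ⟨(q:ℕ), by omega⟩) = a q
      rw [splitIdx, dif_pos (show (q:ℕ) < k from q.isLt)]
      apply Fin.ext
      simp only [Fin.coe_cast]
    · exact splitIdx_mid hk a x b
    · funext q
      exact splitIdx_right hk a x b q (by omega)
  · intro j
    funext p
    simp only [splitIdx]
    by_cases h : (p : ℕ) < k
    · rw [dif_pos h]
      apply Fin.ext
      simp only [Fin.coe_cast]
    · by_cases h2 : (p : ℕ) = k
      · rw [dif_neg h, dif_pos h2]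
        apply Fin.ext
        simp only [Fin.coe_cast]
        exact congrArg (fun d => (j d : ℕ)) (Fin.ext h2.symm)
      · rw [dif_neg h, dif_neg h2]
        apply Fin.ext
        simp only [Fin.coe_cast]
        exact congrArg (fun d => (j d : ℕ))
          (Fin.ext (show k + 1 + ((p:ℕ) - (k+1)) = (p:ℕ) by omega))

lemma sum_split (m k : ℕ) (hk : k < m) (n : ℕ → ℕ) {γ : Type*} [AddCommMonoid γ]
    (f : ((p : Fin m) → Fin (n p)) → γ) :
    ∑ j : (p : Fin m) → Fin (n p), f j
      = ∑ a : (q : Fin k) → Fin (n (0 + (q:ℕ))), ∑ x : Fin (n k),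
          ∑ b : (q : Fin (m - (k+1))) → Fin (n (k+1+(q:ℕ))), f (splitIdx m k hk a x b) := by
  rw [← Fintype.sum_bijective _ (splitIdx_bijective (n := n) hk) _ f (fun w => rfl)]
  rw [Fintype.sum_prod_type]
  exact Finset.sum_congr rfl fun a _ => Fintype.sum_prod_type _

end aux

lemma triple_factor {A B C : Type*} [Fintype A] [Fintype B] [Fintype C]
    (f f' : A → ℝ) (g g' : B → ℝ) (h h' : C → ℝ) :
    ∑ a : A, ∑ x : B, ∑ b : C, (f a * g x * h b) * (f' a * g' x * h' b)
      = (∑ a : A, f a * f' a) * ((∑ x : B, g x * g' x) * (∑ b : C, h b * h' b)) := by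
  symm
  rw [Finset.sum_mul_sum]
  rw [Finset.sum_mul_sum]
  simp only [Finset.mul_sum]
  exact Finset.sum_congr rfl fun a _ => Finset.sum_congr rfl fun x _ =>
    Finset.sum_congr rfl fun b _ => by ring

/-- if the cores `G 0, …, G (k-1)` are left-orthonormal and the cores
`G (k+1), …, G (m-1)` are right-orthonormal, then the frame matrix
`X_{≠k} = X^{<k} ⊗ I_{n k} ⊗ (X^{>k})ᵀ` is orthonormal. -/
theorem frame_matrix_orthonormal
    (m k : ℕ) (hk : k < m) (n r : ℕ → ℕ) (hr0 : r 0 = 1) (hrm : r m = 1)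
    (G : (p : ℕ) → Fin (n p) → Matrix (Fin (r p)) (Fin (r (p + 1))) ℝ)
    (hleft : ∀ p, p < k → ∑ i : Fin (n p), (G p i)ᵀ * G p i = 1)
    (hright : ∀ p, k < p → p < m → ∑ i : Fin (n p), G p i * (G p i)ᵀ = 1)
    (F : Matrix ((p : Fin m) → Fin (n p)) (Fin (r k) × Fin (n k) × Fin (r (k + 1))) ℝ)
    (hF : ∀ (j : (p : Fin m) → Fin (n p)) (α : Fin (r k)) (i : Fin (n k))
        (β : Fin (r (k + 1))),
      F j (α, i, β) =
        (matChain ℝ (fun p => Fin (r p)) (coresOf m n r G j) 0 k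
            (finCongr hr0.symm 0) (Fin.cast (congrArg r (Nat.zero_add k).symm) α)) *
        (if i = j ⟨k, hk⟩ then 1 else 0) *
        (matChain ℝ (fun p => Fin (r p)) (coresOf m n r G j) (k + 1) (m - (k + 1))
            β (finCongr (hrm.symm.trans
                (congrArg r (show m = k + 1 + (m - (k + 1)) by omega))) 0))) :
    Fᵀ * F = 1 := by
  have hm' : k + 1 + (m - (k + 1)) = m := by omega
  have hrz : r (k + 1 + (m - (k + 1))) = 1 := by rw [hm', hrm]
  ext ⟨α, i, β⟩ ⟨α', i', β'⟩
  rw [Matrix.mul_apply, Matrix.one_apply]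
  simp only [Matrix.transpose_apply]
  have key : ∀ j : (p : Fin m) → Fin (n p),
      F j (α, i, β) * F j (α', i', β')
        = (chainT G 0 k (fun q => j ⟨0 + (q:ℕ), by omega⟩)
              (finCongr hr0.symm 0) (Fin.cast (congrArg r (Nat.zero_add k).symm) α) *
            (if i = j ⟨k, hk⟩ then 1 else 0) *
            chainT G (k+1) (m - (k+1)) (fun q => j ⟨k + 1 + (q:ℕ), by omega⟩)
              β (finCongr (hrm.symm.trans
                (congrArg r (show m = k + 1 + (m - (k + 1)) by omega))) 0)) *
          (chainT G 0 k (fun q => j ⟨0 + (q:ℕ), by omega⟩)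
              (finCongr hr0.symm 0) (Fin.cast (congrArg r (Nat.zero_add k).symm) α') *
            (if i' = j ⟨k, hk⟩ then 1 else 0) *
            chainT G (k+1) (m - (k+1)) (fun q => j ⟨k + 1 + (q:ℕ), by omega⟩)
              β' (finCongr (hrm.symm.trans
                (congrArg r (show m = k + 1 + (m - (k + 1)) by omega))) 0)) := by
    intro j
    rw [hF, hF, matChain_eq_chainT G j 0 k (by omega),
      matChain_eq_chainT G j (k+1) (m - (k+1)) (by omega)]
  rw [Finset.sum_congr rfl fun j _ => key j, sum_split m k hk n]
  simp only [splitIdx_left, splitIdx_mid, splitIdx_right]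
  have uniq0 : ∀ t : Fin (r 0), t = finCongr hr0.symm 0 := fun t => Fin.ext (by
    have h1 := t.isLt
    have h2 := (finCongr hr0.symm (0 : Fin 1)).isLt
    omega)
  have uniqz : ∀ t : Fin (r (k + 1 + (m - (k + 1)))),
      t = finCongr (hrm.symm.trans
        (congrArg r (show m = k + 1 + (m - (k + 1)) by omega))) 0 := fun t => Fin.ext (by
    have h1 := t.isLt
    have h2 := (finCongr (hrm.symm.trans
        (congrArg r (show m = k + 1 + (m - (k + 1)) by omega))) (0 : Fin 1)).isLt
    omega)
  have haveA : ∑ a : (q : Fin k) → Fin (n (0 + (q:ℕ))),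
      chainT G 0 k a (finCongr hr0.symm 0) (Fin.cast (congrArg r (Nat.zero_add k).symm) α) *
        chainT G 0 k a (finCongr hr0.symm 0) (Fin.cast (congrArg r (Nat.zero_add k).symm) α')
      = if α = α' then 1 else 0 := by
    have hsum := left_orth_sum G 0 k (fun p hp hp' => hleft p (by omega))
    calc ∑ a : (q : Fin k) → Fin (n (0 + (q:ℕ))),
            chainT G 0 k a (finCongr hr0.symm 0) (Fin.cast (congrArg r (Nat.zero_add k).symm) α) *
              chainT G 0 k a (finCongr hr0.symm 0) (Fin.cast (congrArg r (Nat.zero_add k).symm) α')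
        = ∑ a : (q : Fin k) → Fin (n (0 + (q:ℕ))),
            ((chainT G 0 k a)ᵀ * chainT G 0 k a)
              (Fin.cast (congrArg r (Nat.zero_add k).symm) α)
              (Fin.cast (congrArg r (Nat.zero_add k).symm) α') := by
          refine Finset.sum_congr rfl fun a _ => ?_
          rw [Matrix.mul_apply,
            Fintype.sum_eq_single (finCongr hr0.symm 0) (fun t ht => absurd (uniq0 t) ht),
            Matrix.transpose_apply]
      _ = (∑ a : (q : Fin k) → Fin (n (0 + (q:ℕ))), (chainT G 0 k a)ᵀ * chainT G 0 k a)
              (Fin.cast (congrArg r (Nat.zero_add k).symm) α)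
              (Fin.cast (congrArg r (Nat.zero_add k).symm) α') := by rw [Matrix.sum_apply]
      _ = if α = α' then 1 else 0 := by
          rw [hsum, Matrix.one_apply]
          simp [Fin.ext_iff]
  have haveB : ∑ b : (q : Fin (m - (k+1))) → Fin (n (k+1+(q:ℕ))),
      chainT G (k+1) (m - (k+1)) b β (finCongr (hrm.symm.trans
          (congrArg r (show m = k + 1 + (m - (k + 1)) by omega))) 0) *
        chainT G (k+1) (m - (k+1)) b β' (finCongr (hrm.symm.trans
          (congrArg r (show m = k + 1 + (m - (k + 1)) by omega))) 0)
      = if β = β' then 1 else 0 := by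
    have hsum := right_orth_sum G (k+1) (m - (k+1))
      (fun p hp hp' => hright p (by omega) (by omega))
    calc ∑ b : (q : Fin (m - (k+1))) → Fin (n (k+1+(q:ℕ))),
            chainT G (k+1) (m - (k+1)) b β (finCongr (hrm.symm.trans
                (congrArg r (show m = k + 1 + (m - (k + 1)) by omega))) 0) *
              chainT G (k+1) (m - (k+1)) b β' (finCongr (hrm.symm.trans
                (congrArg r (show m = k + 1 + (m - (k + 1)) by omega))) 0)
        = ∑ b : (q : Fin (m - (k+1))) → Fin (n (k+1+(q:ℕ))),
            (chainT G (k+1) (m - (k+1)) b * (chainT G (k+1) (m - (k+1)) b)ᵀ) β β' := by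
          refine Finset.sum_congr rfl fun b _ => ?_
          rw [Matrix.mul_apply,
            Fintype.sum_eq_single (finCongr (hrm.symm.trans
              (congrArg r (show m = k + 1 + (m - (k + 1)) by omega))) 0)
              (fun t ht => absurd (uniqz t) ht),
            Matrix.transpose_apply]
      _ = (∑ b : (q : Fin (m - (k+1))) → Fin (n (k+1+(q:ℕ))),
            chainT G (k+1) (m - (k+1)) b * (chainT G (k+1) (m - (k+1)) b)ᵀ) β β' := by
          rw [Matrix.sum_apply]
      _ = if β = β' then 1 else 0 := by rw [hsum, Matrix.one_apply]
  have haveX : ∑ x : Fin (n k), (if i = x then (1:ℝ) else 0) * (if i' = x then 1 else 0)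
      = if i = i' then 1 else 0 := by
    rw [Fintype.sum_eq_single i (fun x hx => by rw [if_neg (fun c => hx c.symm), zero_mul])]
    rw [if_pos rfl, one_mul]
    simp [eq_comm]
  rw [triple_factor, haveA, haveX, haveB]
  by_cases h1 : α = α' <;> by_cases h2 : i = i' <;> by_cases h3 : β = β' <;>
    simp [h1, h2, h3, Prod.ext_iff]
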